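/- Let N ≥ 1 be a natural number, let α₁, …, α_N be complex numbers, and let β₂ be a complex number such that for every even n with 1 ≤ n ≤ N, there exists 0 ≤ θ ≤ 1 with β₂·α_{n/2} = θ·α_n (i.e. β₂·α_{n/2} lies on the segment joining 0 and α_n). Then one has the lower bound |1 − β₂|·|∑_{n=1}^N α_n| ≥ 2|α₁| − (1 − |β₂|)·∑_{n=1}^N |α_n| − 2|β₂|·∑_{N/2 < n ≤ N} |α_n|, and the upper bound |1 − β₂|·|∑_{n=1}^N α_n| ≤ (1 − |β₂|)·∑_{n=1}^N |α_n| + 2|β₂|·∑_{N/2 < n ≤ N} |α_n|. -/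

import Mathlib

/-- Lemma 9.2 ("trib2"): lower and upper bounds on a mollified sum. -/
theorem euler2_mollifier_bounds (N : ℕ) (hN : 1 ≤ N) (α : ℕ → ℂ) (β₂ : ℂ)
    (h : ∀ m : ℕ, 1 ≤ 2 * m → 2 * m ≤ N →
      ∃ θ : ℝ, 0 ≤ θ ∧ θ ≤ 1 ∧ β₂ * α m = (θ : ℂ) * α (2 * m)) :
    (2 * ‖α 1‖ -
        (1 - ‖β₂‖) * (∑ n ∈ Finset.Icc 1 N, ‖α n‖) -
        2 * ‖β₂‖ * (∑ n ∈ Finset.Ioc (N / 2) N, ‖α n‖) ≤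
      ‖1 - β₂‖ * ‖∑ n ∈ Finset.Icc 1 N, α n‖) ∧
    ‖1 - β₂‖ * ‖∑ n ∈ Finset.Icc 1 N, α n‖ ≤
      (1 - ‖β₂‖) * (∑ n ∈ Finset.Icc 1 N, ‖α n‖) +
        2 * ‖β₂‖ * (∑ n ∈ Finset.Ioc (N / 2) N, ‖α n‖) := by
  classical
  have hIcc : Finset.Icc 1 N = Finset.Ioc 0 N := Finset.Icc_add_one_left_eq_Ioc 0 N
  rw [hIcc]
  set E : Finset ℕ := Finset.Ioc 0 (N / 2) with hE
  set Tl : Finset ℕ := Finset.Ioc (N / 2) N with hTl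
  set S : Finset ℕ := Finset.Ioc 0 N with hSdef
  -- choose the θ's
  have hθ' : ∀ m ∈ E, ∃ θ : ℝ, 0 ≤ θ ∧ θ ≤ 1 ∧ β₂ * α m = (θ : ℂ) * α (2 * m) := by
    intro m hm
    rw [hE, Finset.mem_Ioc] at hm
    exact h m (by omega) (by omega)
  choose! θf hθ0 hθ1 hθeq using hθ'
  set I : Finset ℕ := E.image (fun m => 2 * m) with hI
  set d : ℕ → ℝ := fun n => if n ∈ I then θf (n / 2) else 0 with hd
  have hImemE : ∀ n ∈ I, n / 2 ∈ E ∧ 2 * (n / 2) = n := by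
    intro n hn
    obtain ⟨m, hm, rfl⟩ := Finset.mem_image.mp hn
    have h2 : 2 * m / 2 = m := by omega
    refine ⟨?_, by omega⟩
    rw [h2]; exact hm
  have hd0 : ∀ n, 0 ≤ d n := by
    intro n
    by_cases hn : n ∈ I
    · simpa [hd, hn] using hθ0 _ (hImemE n hn).1
    · simp [hd, hn]
  have hd1 : ∀ n, d n ≤ 1 := by
    intro n
    by_cases hn : n ∈ I
    · simpa [hd, hn] using hθ1 _ (hImemE n hn).1
    · simp [hd, hn]
  have hd1' : d 1 = 0 := by
    have h1 : (1 : ℕ) ∉ I := by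
      intro h1
      obtain ⟨m, _, hm2⟩ := Finset.mem_image.mp h1
      omega
    simp [hd, h1]
  have hIsub : I ⊆ S := by
    intro n hn
    obtain ⟨m, hm, rfl⟩ := Finset.mem_image.mp hn
    rw [hE, Finset.mem_Ioc] at hm
    rw [hSdef, Finset.mem_Ioc]
    omega
  have hinj : ∀ a ∈ E, ∀ b ∈ E, 2 * a = 2 * b → a = b := by intro a _ b _ hab; omega
  -- transporting sums along the doubling map (complex version)
  have hsum1 : ∑ n ∈ S, (d n : ℂ) * α n = ∑ m ∈ E, ((θf m : ℝ) : ℂ) * α (2 * m) := by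
    rw [← Finset.sum_subset hIsub (fun n _ hn => by simp [hd, hn])]
    rw [hI, Finset.sum_image hinj]
    refine Finset.sum_congr rfl fun m hm => ?_
    have hmem : 2 * m ∈ I := by rw [hI]; exact Finset.mem_image_of_mem _ hm
    have h2 : 2 * m / 2 = m := by omega
    simp [hd, hmem, h2]
  -- real version
  have hsum1R : ∑ n ∈ S, d n * ‖α n‖ = ∑ m ∈ E, θf m * ‖α (2 * m)‖ := by
    rw [← Finset.sum_subset hIsub (fun n _ hn => by simp [hd, hn])]
    rw [hI, Finset.sum_image hinj]
    refine Finset.sum_congr rfl fun m hm => ?_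
    have hmem : 2 * m ∈ I := by rw [hI]; exact Finset.mem_image_of_mem _ hm
    have h2 : 2 * m / 2 = m := by omega
    simp [hd, hmem, h2]
  -- splitting S into E and Tl
  have hsplit : (∑ n ∈ E, α n) + (∑ n ∈ Tl, α n) = ∑ n ∈ S, α n :=
    Finset.sum_Ioc_consecutive _ (Nat.zero_le _) (Nat.div_le_self N 2)
  have hsplitR : (∑ n ∈ E, ‖α n‖) + (∑ n ∈ Tl, ‖α n‖) = ∑ n ∈ S, ‖α n‖ :=
    Finset.sum_Ioc_consecutive _ (Nat.zero_le _) (Nat.div_le_self N 2)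
  set A : ℂ := ∑ n ∈ S, (1 - (d n : ℂ)) * α n with hA
  -- the key algebraic identity
  have key : (1 - β₂) * ∑ n ∈ S, α n = A - β₂ * ∑ n ∈ Tl, α n := by
    have h1 : β₂ * ∑ n ∈ E, α n = ∑ n ∈ S, (d n : ℂ) * α n := by
      rw [hsum1, Finset.mul_sum]
      exact Finset.sum_congr rfl fun m hm => hθeq m hm
    have h2 : β₂ * ∑ n ∈ S, α n = ∑ n ∈ S, (d n : ℂ) * α n + β₂ * ∑ n ∈ Tl, α n := by
      rw [← hsplit, mul_add, h1]
    have h3 : A = ∑ n ∈ S, α n - ∑ n ∈ S, (d n : ℂ) * α n := by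
      rw [hA, ← Finset.sum_sub_distrib]
      exact Finset.sum_congr rfl fun n _ => by ring
    rw [sub_mul, one_mul, h2, h3]; ring
  -- the real coefficient sum
  set AB : ℝ := ∑ n ∈ S, (1 - d n) * ‖α n‖ with hAB
  have hABeq : AB = (1 - ‖β₂‖) * (∑ n ∈ S, ‖α n‖) + ‖β₂‖ * ∑ n ∈ Tl, ‖α n‖ := by
    have h1 : ∑ n ∈ S, d n * ‖α n‖ = ‖β₂‖ * ∑ m ∈ E, ‖α m‖ := by
      rw [hsum1R, Finset.mul_sum]
      refine Finset.sum_congr rfl fun m hm => ?_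
      have : θf m * ‖α (2 * m)‖ = ‖((θf m : ℝ) : ℂ) * α (2 * m)‖ := by
        rw [norm_mul, Complex.norm_real, Real.norm_eq_abs, abs_of_nonneg (hθ0 m hm)]
      rw [this, ← hθeq m hm, norm_mul]
    have h2 : ∑ m ∈ E, ‖α m‖ = (∑ n ∈ S, ‖α n‖) - ∑ n ∈ Tl, ‖α n‖ := by
      rw [← hsplitR]; ring
    rw [hAB]
    have : ∑ n ∈ S, (1 - d n) * ‖α n‖ =
        (∑ n ∈ S, ‖α n‖) - ∑ n ∈ S, d n * ‖α n‖ := by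
      rw [← Finset.sum_sub_distrib]
      exact Finset.sum_congr rfl fun n _ => by ring
    rw [this, h1, h2]; ring
  -- norm of A: upper bound
  have hAle : ‖A‖ ≤ AB := by
    rw [hA, hAB]
    refine le_trans (norm_sum_le _ _) (le_of_eq ?_)
    refine Finset.sum_congr rfl fun n _ => ?_
    rw [norm_mul]
    congr 1
    have : (1 : ℂ) - (d n : ℂ) = ((1 - d n : ℝ) : ℂ) := by push_cast; ring
    rw [this, Complex.norm_real, Real.norm_eq_abs,
      abs_of_nonneg (by linarith [hd1 n])]
  -- norm of A: lower bound
  have h1S : (1 : ℕ) ∈ S := by rw [hSdef, Finset.mem_Ioc]; omega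
  have hAge : 2 * ‖α 1‖ - AB ≤ ‖A‖ := by
    set R : ℂ := ∑ n ∈ S.erase 1, (1 - (d n : ℂ)) * α n with hR
    have hAeq : A = α 1 + R := by
      rw [hA, hR, ← Finset.add_sum_erase _ _ h1S, hd1']
      simp
    have hRle : ‖R‖ ≤ AB - ‖α 1‖ := by
      have hABsplit : AB = ‖α 1‖ + ∑ n ∈ S.erase 1, (1 - d n) * ‖α n‖ := by
        rw [hAB, ← Finset.add_sum_erase _ _ h1S, hd1']
        simp
      have : ‖R‖ ≤ ∑ n ∈ S.erase 1, (1 - d n) * ‖α n‖ := by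
        rw [hR]
        refine le_trans (norm_sum_le _ _) (le_of_eq ?_)
        refine Finset.sum_congr rfl fun n _ => ?_
        rw [norm_mul]
        congr 1
        have : (1 : ℂ) - (d n : ℂ) = ((1 - d n : ℝ) : ℂ) := by push_cast; ring
        rw [this, Complex.norm_real, Real.norm_eq_abs,
          abs_of_nonneg (by linarith [hd1 n])]
      linarith [hABsplit]
    have htri : ‖α 1‖ ≤ ‖A‖ + ‖R‖ := by
      have : α 1 = A - R := by rw [hAeq]; ring
      rw [this]
      exact norm_sub_le A R
    linarith
  -- tail estimates
  have hTlle : ‖∑ n ∈ Tl, α n‖ ≤ ∑ n ∈ Tl, ‖α n‖ := norm_sum_le _ _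
  have hβTl : ‖β₂ * ∑ n ∈ Tl, α n‖ ≤ ‖β₂‖ * ∑ n ∈ Tl, ‖α n‖ := by
    rw [norm_mul]
    exact mul_le_mul_of_nonneg_left hTlle (norm_nonneg _)
  have hmain : ‖1 - β₂‖ * ‖∑ n ∈ S, α n‖ = ‖A - β₂ * ∑ n ∈ Tl, α n‖ := by
    rw [← norm_mul, key]
  constructor
  · -- lower bound
    rw [hmain]
    have h1 : ‖A‖ - ‖β₂ * ∑ n ∈ Tl, α n‖ ≤ ‖A - β₂ * ∑ n ∈ Tl, α n‖ :=
      norm_sub_norm_le _ _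
    have := hABeq
    linarith
  · -- upper bound
    rw [hmain]
    have h1 : ‖A - β₂ * ∑ n ∈ Tl, α n‖ ≤ ‖A‖ + ‖β₂ * ∑ n ∈ Tl, α n‖ :=
      norm_sub_le _ _
    linarith
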